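/- arXiv:1109.5273 — 2 statements merged into one kernel-verified Lean document; each statement's English description precedes it below -/
import Mathlib

section
/- Let σ be a positive Borel measure on ℝⁿ with ∫ (1+|u|²)^{-p} dσ(u) < ∞ for some p ∈ ℕ. Then the Schwartz space is dense in L²(ℝⁿ, σ). -/
open MeasureTheory

theorem isFiniteMeasureOnCompacts_of_lintegral_ofReal_lt_top {X : Type*} [TopologicalSpace X]
    [MeasurableSpace X] [OpensMeasurableSpace X] {μ : Measure X} (w : X → ℝ)
    (hw : Continuous w) (hw_pos : ∀ x, 0 < w x)
    (hμ : ∫⁻ x, ENNReal.ofReal (w x) ∂μ < ⊤) :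
    IsFiniteMeasureOnCompacts μ where
  lt_top_of_isCompact K hK := by
    obtain ⟨c, hc_pos, hc⟩ := hK.exists_forall_le' hw.continuousOn fun x _ => hw_pos x
    have hc' : ENNReal.ofReal c ≠ 0 := (ENNReal.ofReal_pos.2 hc_pos).ne'
    calc μ K ≤ μ {x | ENNReal.ofReal c ≤ ENNReal.ofReal (w x)} :=
          measure_mono fun x hx => ENNReal.ofReal_le_ofReal (hc x hx)
      _ ≤ (∫⁻ x, ENNReal.ofReal (w x) ∂μ) / ENNReal.ofReal c :=
          meas_ge_le_lintegral_div (ENNReal.continuous_ofReal.comp hw).aemeasurable hc'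
            ENNReal.ofReal_ne_top
      _ < ⊤ := ENNReal.div_lt_top hμ.ne hc'

/-- The Schwartz space is dense in `L²(ℝⁿ, σ)` when `σ` has polynomial growth. -/
theorem stmt5 {n : ℕ} (σ : Measure (EuclideanSpace ℝ (Fin n))) (p : ℕ)
    (hσ : ∫⁻ u, ENNReal.ofReal (1 / (1 + ‖u‖ ^ 2) ^ p) ∂σ < ⊤)
    (f : EuclideanSpace ℝ (Fin n) → ℂ) (hf : MemLp f 2 σ)
    (ε : ℝ) (hε : 0 < ε) :
    ∃ ψ : SchwartzMap (EuclideanSpace ℝ (Fin n)) ℂ,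
      eLpNorm (fun x => f x - ψ x) 2 σ < ENNReal.ofReal ε := by
  have : IsFiniteMeasureOnCompacts σ :=
    isFiniteMeasureOnCompacts_of_lintegral_ofReal_lt_top (fun u => 1 / (1 + ‖u‖ ^ 2) ^ p)
      (continuous_const.div (by fun_prop) fun u => by positivity) (fun u => by positivity) hσ
  obtain ⟨g, hg_supp, hg_smooth, hg⟩ :=
    hf.exist_eLpNorm_sub_le ENNReal.ofNat_ne_top one_le_two (half_pos hε)
  exact ⟨hg_supp.toSchwartzMap hg_smooth,
    hg.trans_lt ((ENNReal.ofReal_lt_ofReal_iff hε).2 (half_lt_self hε))⟩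
end

section
/- Let H be a Hilbert space, X : ℝⁿ → H with ‖X(t) − X(s)‖² = F(t−s) for a function F, and let (U(t)) be the associated unitary representation of (ℝⁿ, +) with U(t)X(s) = X(t+s), where the X(s) span H. Then U is strongly continuous if and only if F is continuous at 0 (equivalently, continuous on ℝⁿ). -/
/-!
Since `‖U t (X s) - X s‖² = F t`, continuity of `F` at `0` is the same as continuity at `0` of
every orbit `t ↦ U t (X s)`. The vectors whose orbit is continuous at `0` form a subspace, closed
because the `U t` are isometries, hence equal to `H`; the group law moves continuity at `0` to every
point.
-/

open Filter Topology

section StrongContinuity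

variable {ι R E : Type*} [Semiring R] [SeminormedAddCommGroup E] [Module R E]

def tendstoSelfSubmodule (U : ι → E ≃ₗᵢ[R] E) (l : Filter ι) [ContinuousConstSMul R E] :
    Submodule R E where
  carrier := {v | Tendsto (U · v) l (𝓝 v)}
  add_mem' hv hw := by simpa only [Set.mem_ofPred_eq, map_add] using hv.add hw
  zero_mem' := by simpa only [Set.mem_ofPred_eq, map_zero] using tendsto_const_nhds
  smul_mem' c _ hv := by simpa only [Set.mem_ofPred_eq, map_smul] using hv.const_smul c

variable [ContinuousConstSMul R E]

theorem isClosed_tendstoSelfSubmodule (U : ι → E ≃ₗᵢ[R] E) (l : Filter ι) :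
    IsClosed (tendstoSelfSubmodule U l : Set E) :=
  (LipschitzWith.uniformEquicontinuous (fun i => (U i : E → E)) 1
    fun i => (U i).lipschitz).equicontinuous.isClosed_setOfPred_tendsto continuous_id

theorem tendstoSelfSubmodule_eq_top {κ : Type*} (U : ι → E ≃ₗᵢ[R] E) (l : Filter ι) {X : κ → E}
    (hspan : (Submodule.span R (Set.range X)).topologicalClosure = ⊤)
    (hX : ∀ s, Tendsto (U · (X s)) l (𝓝 (X s))) :
    tendstoSelfSubmodule U l = ⊤ := by
  refine top_unique (hspan ▸ Submodule.topologicalClosure_minimal _ ?_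
    (isClosed_tendstoSelfSubmodule U l))
  rw [Submodule.span_le]
  rintro _ ⟨s, rfl⟩
  exact hX s

end StrongContinuity

theorem continuous_apply_of_tendsto_nhds_zero {G E : Type*} [TopologicalSpace G] [AddGroup G]
    [IsTopologicalAddGroup G] [TopologicalSpace E] (U : G → E → E)
    (hU : ∀ a b v, U (a + b) v = U a (U b v)) (h0 : ∀ v, Tendsto (U · v) (𝓝 0) (𝓝 v)) (v : E) :
    Continuous (U · v) := by
  refine continuous_iff_continuousAt.mpr fun t₀ => ?_
  have hshift : (U · v) = fun t => U (t - t₀) (U t₀ v) := funext fun t => by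
    rw [← hU, sub_add_cancel]
  rw [ContinuousAt, hshift]
  exact (h0 (U t₀ v)).comp (tendsto_sub_nhds_zero_iff.mpr tendsto_id)

theorem tendsto_nhds_zero_iff_sq {α : Type*} {l : Filter α} {g : α → ℝ} (hg : ∀ a, 0 ≤ g a) :
    Tendsto g l (𝓝 0) ↔ Tendsto (g · ^ 2) l (𝓝 0) := by
  refine ⟨fun h => by simpa using h.pow 2, fun h => ?_⟩
  simpa [Function.comp_def, Real.sqrt_sq (hg _)] using (Real.continuous_sqrt.tendsto 0).comp h

theorem tendsto_shift_iff_tendsto_nhds_zero {G E : Type*} [AddGroup G] [SeminormedAddCommGroup E]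
    {X : G → E} {F : G → ℝ} (hF : ∀ t s, ‖X t - X s‖ ^ 2 = F (t - s)) {U : G → E → E}
    (hcov : ∀ t s, U t (X s) = X (t + s)) (l : Filter G) (s : G) :
    Tendsto (U · (X s)) l (𝓝 (X s)) ↔ Tendsto F l (𝓝 0) := by
  have hnorm : ∀ t, ‖U t (X s) - X s‖ ^ 2 = F t := fun t => by
    rw [hcov, hF, add_sub_cancel_right]
  rw [tendsto_iff_norm_sub_tendsto_zero, tendsto_nhds_zero_iff_sq fun _ => norm_nonneg _]
  simp only [hnorm]

theorem stmt8_general {n : ℕ} {H : Type*} [NormedAddCommGroup H] [InnerProductSpace ℝ H]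
    (X : EuclideanSpace ℝ (Fin n) → H) (F : EuclideanSpace ℝ (Fin n) → ℝ)
    (hF : ∀ t s, ‖X t - X s‖ ^ 2 = F (t - s))
    (U : EuclideanSpace ℝ (Fin n) → (H ≃ₗᵢ[ℝ] H))
    (hgroup : ∀ t₁ t₂ v, U (t₁ + t₂) v = U t₁ (U t₂ v))
    (hcov : ∀ t s, U t (X s) = X (t + s))
    (hspan : (Submodule.span ℝ (Set.range X)).topologicalClosure = ⊤) :
    (∀ v : H, Continuous fun t => U t v) ↔ ContinuousAt F 0 := by
  have hF0 : F 0 = 0 := by simpa using (hF 0 0).symm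
  have hshift : ∀ s, Tendsto (U · (X s)) (𝓝 0) (𝓝 (X s)) ↔ ContinuousAt F 0 := fun s => by
    rw [ContinuousAt, hF0]
    exact tendsto_shift_iff_tendsto_nhds_zero hF hcov _ s
  constructor
  · intro hU
    rw [← hshift 0]
    simpa only [hcov, add_zero] using (hU (X 0)).tendsto 0
  · intro hFc
    have hall := tendstoSelfSubmodule_eq_top U (𝓝 0) hspan fun s => (hshift s).mpr hFc
    exact continuous_apply_of_tendsto_nhds_zero (U · ·) hgroup
      fun v => (hall ▸ Submodule.mem_top : v ∈ tendstoSelfSubmodule U (𝓝 0))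

/-- Lemma 8.2: the unitary shift group is strongly continuous iff the structure
function `F` of the stationary mean-square increments is continuous at `0`. -/
theorem stmt8 {n : ℕ} {H : Type*} [NormedAddCommGroup H] [InnerProductSpace ℝ H]
    [CompleteSpace H]
    (X : EuclideanSpace ℝ (Fin n) → H) (F : EuclideanSpace ℝ (Fin n) → ℝ)
    (hF : ∀ t s, ‖X t - X s‖ ^ 2 = F (t - s))
    (U : EuclideanSpace ℝ (Fin n) → (H ≃ₗᵢ[ℝ] H))
    (hgroup : ∀ t₁ t₂ v, U (t₁ + t₂) v = U t₁ (U t₂ v))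
    (hcov : ∀ t s, U t (X s) = X (t + s))
    (hspan : (Submodule.span ℝ (Set.range X)).topologicalClosure = ⊤) :
    (∀ v : H, Continuous fun t => U t v) ↔ ContinuousAt F 0 :=
  stmt8_general X F hF U hgroup hcov hspan
end
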